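/- The complex vector space spanned, inside the space of all functions H₂ → ℂ, by the ten functions Θ_m⁴ for m running over the even half-integer characteristics, has dimension at most 6. (These linear relations among the coordinates of ψ allow one to view the image ψ(A₂(2)^S(ℂ)) as a quartic hypersurface in ℙ⁵.) -/

import Mathlib

/-!
Squaring the theta series and substituting `n = u + v + r`, `m = u - v`, where `r ∈ {0, 1}²` is
the parity of `n + m`, gives the duplication formula
`Θ[a, b](τ)² = ∑ᵣ (-1)^(2 r·b) Θ[a + r/2, 0](2τ) Θ[r/2, 0](2τ)`.
For `a = α/2` with `α ∈ (ℤ/2)²`, and `x_r = Θ[r/2, 0](2τ)` the four second-order theta constants,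
the right-hand side is `∑ᵣ χ(r) x_{α+r} x_r` with `χ` a character of `(ℤ/2)²`; hence
`Θ[a, b]⁴ = ∑ₜ χ(t) Q_{α,t}` where `Q_{α,t} = ∑ᵣ x_{α+r} x_r x_{α+t-r} x_{t-r}`.
Since `(ℤ/2)²` is the Klein four-group, each `Q_{α,t}` is `∑ᵣ x_r² x_{r+s}²` for some `s` or
`4 ∏ᵣ x_r`, so all the `Θ[a, b]⁴` lie in the span of these five functions of `τ`.
-/

open scoped BigOperators
open Complex Matrix

noncomputable section

/-- `τ` belongs to the Siegel upper half-space of degree 2: it is a symmetric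
`2 × 2` complex matrix whose imaginary part is positive definite. -/
def IsSiegel (τ : Matrix (Fin 2) (Fin 2) ℂ) : Prop :=
  τ.IsSymm ∧ (Matrix.of fun i j => (τ i j).im).PosDef

/-- The term of index `n ∈ ℤ²` of the theta series with characteristic `(a, b)`. -/
def thetaTerm (a b : Fin 2 → ℝ) (τ : Matrix (Fin 2) (Fin 2) ℂ) (n : Fin 2 → ℤ) : ℂ :=
  Complex.exp (2 * Real.pi * Complex.I *
      (∑ i, ∑ j, ((n i : ℂ) + (a i : ℂ)) * τ i j * ((n j : ℂ) + (a j : ℂ)))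
    + 2 * Real.pi * Complex.I * (∑ i, (n i : ℂ) * (b i : ℂ)))

/-- The theta constant `Θ_{(a,b)}(τ)`. -/
def Theta (a b : Fin 2 → ℝ) (τ : Matrix (Fin 2) (Fin 2) ℂ) : ℂ :=
  ∑' n : Fin 2 → ℤ, thetaTerm a b τ n

/-- `(a, b)` is a half-integer characteristic when all entries lie in `{0, 1/2}`. -/
def IsHalf (a : Fin 2 → ℝ) : Prop := ∀ i, a i = 0 ∨ a i = 1 / 2

open Real

section Convolution

variable {V R : Type*} [AddCommGroup V] [Fintype V] [CommRing R]

def selfConv (y : V → R) (t : V) : R := ∑ r, y r * y (t - r)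

def shiftProd (x : V → R) (α : V) : V → R := fun r => x (α + r) * x r

lemma sq_sum_char_mul (χ : V → R) (hχ : ∀ r s, χ (r + s) = χ r * χ s) (y : V → R) :
    (∑ r, χ r * y r) ^ 2 = ∑ t, χ t * selfConv y t := by
  calc (∑ r, χ r * y r) ^ 2 = ∑ r, ∑ t, χ r * y r * (χ (t - r) * y (t - r)) := by
        rw [sq, Finset.sum_mul_sum]
        exact Finset.sum_congr rfl fun r _ =>
          (Fintype.sum_equiv (Equiv.subRight r) _ _ fun t => rfl).symm
    _ = ∑ t, χ t * selfConv y t := by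
        rw [Finset.sum_comm]
        refine Finset.sum_congr rfl fun t _ => ?_
        rw [selfConv, Finset.mul_sum]
        refine Finset.sum_congr rfl fun r _ => ?_
        rw [show t = r + (t - r) by abel, hχ, add_sub_cancel_left]
        ring

lemma selfConv_shiftProd_zero (h2 : ∀ v : V, v + v = 0) (x : V → R) (α : V) :
    selfConv (shiftProd x α) 0 = selfConv (shiftProd x 0) α := by
  have hneg : ∀ v : V, -v = v := fun v => neg_eq_of_add_eq_zero_left (h2 v)
  refine Finset.sum_congr rfl fun r _ => ?_
  simp only [shiftProd, sub_eq_add_neg, hneg, zero_add, add_comm α r]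
  ring

lemma selfConv_shiftProd_self (h2 : ∀ v : V, v + v = 0) (x : V → R) (α : V) :
    selfConv (shiftProd x α) α = selfConv (shiftProd x 0) α := by
  have hneg : ∀ v : V, -v = v := fun v => neg_eq_of_add_eq_zero_left (h2 v)
  refine Finset.sum_congr rfl fun r _ => ?_
  simp only [shiftProd, sub_eq_add_neg, hneg, ← add_assoc, h2, zero_add]
  ring

/-- In the Klein four-group, `{0, α, t, α + t}` is the whole group. -/
lemma selfConv_shiftProd_of_ne [DecidableEq V] (h2 : ∀ v : V, v + v = 0)
    (h4 : Fintype.card V = 4) (x : V → R) {α t : V} (hα : α ≠ 0) (ht : t ≠ 0) (hαt : t ≠ α) :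
    selfConv (shiftProd x α) t = 4 * ∏ v, x v := by
  have hneg : ∀ v : V, -v = v := fun v => neg_eq_of_add_eq_zero_left (h2 v)
  have hαt' : α + t ≠ 0 := fun h => hαt (by rw [← hneg α]; exact eq_neg_of_add_eq_zero_right h)
  have h0 : (0 : V) ∉ ({α, t, α + t} : Finset V) := by simp [hα.symm, ht.symm, hαt'.symm]
  have h1 : α ∉ ({t, α + t} : Finset V) := by simp [hαt.symm, ht]
  have h3 : t ∉ ({α + t} : Finset V) := by simp [hα]
  have huniv : ({0, α, t, α + t} : Finset V) = Finset.univ := by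
    refine Finset.eq_univ_of_card _ ?_
    rw [Finset.card_insert_of_notMem h0, Finset.card_insert_of_notMem h1,
      Finset.card_insert_of_notMem h3, Finset.card_singleton, h4]
  have hterm : ∀ r, shiftProd x α r * shiftProd x α (t - r) = ∏ v, x v := by
    intro r
    rw [← Equiv.prod_comp (Equiv.addLeft r) x, ← huniv, Finset.prod_insert h0,
      Finset.prod_insert h1, Finset.prod_insert h3, Finset.prod_singleton]
    simp only [shiftProd, Equiv.coe_addLeft, sub_eq_add_neg, hneg, add_zero]
    rw [add_comm r α, add_comm r t, add_comm r (α + t), add_assoc]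
    ring
  simp only [selfConv, hterm, Finset.sum_const, Finset.card_univ, h4, nsmul_eq_mul]
  norm_num

def quarticBasis (x : V → R) : Option V → R
  | none => ∏ v, x v
  | some s => selfConv (shiftProd x 0) s

lemma selfConv_shiftProd_mem_span [DecidableEq V] (h2 : ∀ v : V, v + v = 0)
    (h4 : Fintype.card V = 4) {X : Type*} (x : X → V → R) (α t : V) :
    (fun p => selfConv (shiftProd (x p) α) t) ∈
      Submodule.span R (Set.range fun s p => quarticBasis (x p) s) := by
  have hbasis : ∀ s, (fun p => quarticBasis (x p) s) ∈
      Submodule.span R (Set.range fun s p => quarticBasis (x p) s) :=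
    fun s => Submodule.subset_span ⟨s, rfl⟩
  by_cases hα : α = 0
  · subst hα
    exact hbasis (some t)
  by_cases ht : t = 0
  · subst ht
    simpa only [selfConv_shiftProd_zero h2, quarticBasis] using hbasis (some α)
  by_cases hαt : t = α
  · subst hαt
    simpa only [selfConv_shiftProd_self h2, quarticBasis] using hbasis (some t)
  simpa only [selfConv_shiftProd_of_ne h2 h4 _ hα ht hαt, quarticBasis, Pi.smul_def,
    smul_eq_mul] using Submodule.smul_mem _ (4 : R) (hbasis none)

end Convolution

lemma summable_exp_neg_mul_sq {c : ℝ} (hc : 0 < c) :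
    Summable fun n : ℤ => rexp (-c * n ^ 2) := by
  have him : (c / π * I).im = c / π := by simp
  refine (summable_norm_iff.mpr ((summable_jacobiTheta₂_term_iff 0 _).mpr
    (him ▸ div_pos hc pi_pos))).congr fun n => ?_
  rw [norm_jacobiTheta₂_term, him, zero_im]
  field_simp
  ring_nf

lemma exists_pos_mul_sq_add_sq_le {A B C : ℝ} (hA : 0 < A) (hD : B ^ 2 < 4 * A * C) :
    ∃ ε > 0, ∀ x y : ℝ, ε * (x ^ 2 + y ^ 2) ≤ A * x ^ 2 + B * x * y + C * y ^ 2 := by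
  have hC : 0 < C := by nlinarith [sq_nonneg B]
  obtain ⟨ε, hε, hεAC, hεA⟩ : ∃ ε : ℝ, 0 < ε ∧ 4 * ε * (A + C) = 4 * A * C - B ^ 2 ∧ ε < A :=
    ⟨(4 * A * C - B ^ 2) / (4 * (A + C)), by apply div_pos <;> linarith, by field_simp,
      by rw [div_lt_iff₀ (by positivity)]; nlinarith [sq_nonneg B]⟩
  refine ⟨ε, hε, fun x y => ?_⟩
  -- this choice of `ε` makes the discriminant of the form minus `ε (x² + y²)` equal to `-4ε²`
  have hsq : (A - ε) * ((A - ε) * x ^ 2 + B * x * y + (C - ε) * y ^ 2)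
      = ((A - ε) * x + B / 2 * y) ^ 2 + (ε * y) ^ 2 := by
    linear_combination (-(y ^ 2) / 4) * hεAC
  nlinarith [sq_nonneg ((A - ε) * x + B / 2 * y), sq_nonneg (ε * y)]

lemma Matrix.PosDef.exists_pos_mul_sum_sq_le {Y : Matrix (Fin 2) (Fin 2) ℝ} (hY : Y.PosDef) :
    ∃ ε > 0, ∀ x : Fin 2 → ℝ, ε * (x 0 ^ 2 + x 1 ^ 2) ≤ x ⬝ᵥ Y *ᵥ x := by
  have hQ : ∀ x : Fin 2 → ℝ,
      x ⬝ᵥ Y *ᵥ x = Y 0 0 * x 0 ^ 2 + (Y 0 1 + Y 1 0) * x 0 * x 1 + Y 1 1 * x 1 ^ 2 := by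
    intro x
    simp only [dotProduct, mulVec, Fin.sum_univ_two]
    ring
  have hA : 0 < Y 0 0 := hY.diag_pos
  have hD : (Y 0 1 + Y 1 0) ^ 2 < 4 * Y 0 0 * Y 1 1 := by
    have h := hY.dotProduct_mulVec_pos (x := ![Y 0 1 + Y 1 0, -(2 * Y 0 0)])
      (fun h => hA.ne' (by simpa using congrFun h 1))
    simp only [star_trivial, hQ, cons_val_zero, cons_val_one, cons_val_fin_one] at h
    nlinarith
  obtain ⟨ε, hε, hle⟩ := exists_pos_mul_sq_add_sq_le hA hD
  exact ⟨ε, hε, fun x => (hle (x 0) (x 1)).trans_eq (hQ x).symm⟩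

lemma norm_thetaTerm (a b : Fin 2 → ℝ) (τ : Matrix (Fin 2) (Fin 2) ℂ) (n : Fin 2 → ℤ) :
    ‖thetaTerm a b τ n‖ = rexp (-(2 * π) * ((fun i => n i + a i) ⬝ᵥ
      (of fun i j => (τ i j).im) *ᵥ fun i => n i + a i)) := by
  rw [thetaTerm, Complex.norm_exp]
  congr 1
  simp only [Fin.sum_univ_two, dotProduct, mulVec, of_apply, add_re, mul_re, mul_im, add_im, I_re,
    I_im, ofReal_re, ofReal_im, intCast_re, intCast_im, re_ofNat, im_ofNat]
  ring

lemma summable_norm_thetaTerm (a b : Fin 2 → ℝ) {τ : Matrix (Fin 2) (Fin 2) ℂ}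
    (hτ : (of fun i j => (τ i j).im).PosDef) :
    Summable fun n => ‖thetaTerm a b τ n‖ := by
  obtain ⟨ε, hε, hq⟩ := hτ.exists_pos_mul_sum_sq_le
  set g : ℤ → ℝ := fun k => rexp (-(π * ε) * k ^ 2)
  have hg : Summable g := summable_exp_neg_mul_sq (by positivity)
  have hprod : Summable fun n : Fin 2 → ℤ => g (n 0) * g (n 1) :=
    (piFinTwoEquiv fun _ => ℤ).summable_iff.2
      (hg.mul_of_nonneg hg (fun _ => (exp_pos _).le) fun _ => (exp_pos _).le)
  refine .of_nonneg_of_le (fun n => norm_nonneg _) (fun n => ?_)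
    (hprod.mul_left (rexp (2 * π * ε * (a 0 ^ 2 + a 1 ^ 2))))
  rw [norm_thetaTerm, ← Real.exp_add, ← Real.exp_add, Real.exp_le_exp]
  have hsq : ∀ i, (n i : ℝ) ^ 2 / 2 - a i ^ 2 ≤ (n i + a i) ^ 2 := fun i => by
    nlinarith [sq_nonneg (n i + 2 * a i)]
  nlinarith [hq fun i => n i + a i, mul_le_mul_of_nonneg_left (add_le_add (hsq 0) (hsq 1)) hε.le,
    pi_pos]

lemma posDef_im_two_smul {τ : Matrix (Fin 2) (Fin 2) ℂ} (hτ : (of fun i j => (τ i j).im).PosDef) :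
    (of fun i j => (((2 : ℂ) • τ) i j).im).PosDef := by
  have h : (of fun i j => (((2 : ℂ) • τ) i j).im) = (2 : ℝ) • of fun i j => (τ i j).im := by
    ext i j
    simp
  rw [h]
  exact hτ.smul two_pos

section Parity

variable {ι : Type*}

def parityLift (r : ι → ZMod 2) : ι → ℤ := fun i => (r i).val

def halfVec (r : ι → ZMod 2) : ι → ℝ := fun i => (parityLift r i : ℝ) / 2

def parityChar [Fintype ι] (b : ι → ℝ) (r : ι → ZMod 2) : ℂ :=
  cexp (2 * π * I * ∑ i, (parityLift r i : ℂ) * b i)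

lemma parityLift_add_add_two_mul (r s : ι → ZMod 2) (i : ι) :
    parityLift (r + s) i + 2 * ((parityLift r i + parityLift s i) / 2) =
      parityLift r i + parityLift s i := by
  simp only [parityLift, Pi.add_apply, ZMod.val_add]
  omega

/-- The inverse sends `(n, m)` to the parity `r` of `n + m` and `u, v = (n ± m - r) / 2`. -/
lemma bijective_parityLift_add_sub :
    Function.Bijective fun p : (ι → ZMod 2) × (ι → ℤ) × (ι → ℤ) =>
      (p.2.1 + p.2.2 + parityLift p.1, p.2.1 - p.2.2) := by
  constructor
  · rintro ⟨r, u, v⟩ ⟨r', u', v'⟩ h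
    simp only [Prod.mk.injEq, funext_iff, Pi.add_apply, Pi.sub_apply, parityLift] at h
    obtain rfl : r = r' := funext fun i => ZMod.val_injective 2 <| by
      have := (r i).val_lt; have := (r' i).val_lt; have := h.1 i; have := h.2 i; omega
    simp only [Prod.mk.injEq, funext_iff, true_and]
    constructor <;> intro i <;> have := h.1 i <;> have := h.2 i <;> omega
  · rintro ⟨n, m⟩
    refine ⟨(fun i => (n i + m i : ℤ), fun i => (n i + m i - (n i + m i) % 2) / 2,
      fun i => (n i - m i - (n i + m i) % 2) / 2), ?_⟩
    simp only [Prod.mk.injEq, funext_iff, Pi.add_apply, Pi.sub_apply, parityLift]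
    constructor <;> intro i <;> have := ZMod.val_intCast (n := 2) (n i + m i) <;>
      simp only [Nat.cast_ofNat] at this <;> omega

lemma parityChar_add [Fintype ι] {b : ι → ℝ} (hb : ∀ i, ∃ k : ℤ, 2 * b i = k)
    (r s : ι → ZMod 2) : parityChar b (r + s) = parityChar b r * parityChar b s := by
  choose k hk using hb
  set c : ι → ℤ := fun i => (parityLift r i + parityLift s i) / 2
  have hterm : ∀ i, (parityLift (r + s) i : ℂ) * b i =
      parityLift r i * b i + parityLift s i * b i - c i * k i := by
    intro i
    have hc : (parityLift (r + s) i : ℂ) + 2 * (c i : ℤ) = parityLift r i + parityLift s i := by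
      exact_mod_cast parityLift_add_add_two_mul r s i
    have hki : 2 * (b i : ℂ) = k i := by exact_mod_cast hk i
    linear_combination (b i : ℂ) * hc - (c i : ℂ) * hki
  rw [parityChar, parityChar, parityChar, ← Complex.exp_add, Complex.exp_eq_exp_iff_exists_int]
  refine ⟨-∑ i, c i * k i, ?_⟩
  simp only [hterm, Finset.sum_sub_distrib, Finset.sum_add_distrib]
  push_cast
  ring

end Parity

lemma thetaTerm_mul_thetaTerm (a : Fin 2 → ℝ) {b : Fin 2 → ℝ} (hb : ∀ i, ∃ k : ℤ, 2 * b i = k)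
    (τ : Matrix (Fin 2) (Fin 2) ℂ) (r : Fin 2 → ZMod 2) (u v : Fin 2 → ℤ) :
    thetaTerm a b τ (u + v + parityLift r) * thetaTerm a b τ (u - v) =
      parityChar b r * (thetaTerm (a + halfVec r) 0 ((2 : ℂ) • τ) u *
        thetaTerm (halfVec r) 0 ((2 : ℂ) • τ) v) := by
  choose k hk using hb
  have hk' : ∀ i, 2 * (b i : ℂ) = k i := fun i => by exact_mod_cast hk i
  simp only [thetaTerm, parityChar, ← Complex.exp_add]
  rw [Complex.exp_eq_exp_iff_exists_int]
  refine ⟨u 0 * k 0 + u 1 * k 1, ?_⟩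
  simp only [Fin.sum_univ_two, Pi.add_apply, Pi.sub_apply, Pi.zero_apply, Matrix.smul_apply,
    smul_eq_mul, halfVec]
  push_cast
  linear_combination (2 * π * I * u 0) * hk' 0 + (2 * π * I * u 1) * hk' 1

theorem Theta_sq (a : Fin 2 → ℝ) {b : Fin 2 → ℝ} (hb : ∀ i, ∃ k : ℤ, 2 * b i = k)
    {τ : Matrix (Fin 2) (Fin 2) ℂ} (hτ : (of fun i j => (τ i j).im).PosDef) :
    Theta a b τ ^ 2 = ∑ r, parityChar b r *
      (Theta (a + halfVec r) 0 ((2 : ℂ) • τ) * Theta (halfVec r) 0 ((2 : ℂ) • τ)) := by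
  let e := Equiv.ofBijective _ (bijective_parityLift_add_sub (ι := Fin 2))
  have hT := summable_norm_thetaTerm a b hτ
  have hτ₂ := posDef_im_two_smul hτ
  have hprod : Summable fun p : (Fin 2 → ℤ) × (Fin 2 → ℤ) =>
      thetaTerm a b τ p.1 * thetaTerm a b τ p.2 := summable_mul_of_summable_norm hT hT
  have hmix : Summable fun c => thetaTerm a b τ (e c).1 * thetaTerm a b τ (e c).2 :=
    e.summable_iff.2 hprod
  rw [sq, Theta, tsum_mul_tsum_of_summable_norm hT hT, ← e.tsum_eq, hmix.tsum_prod, tsum_fintype]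
  refine Finset.sum_congr rfl fun r _ => ?_
  simp only [e, Equiv.ofBijective_apply, thetaTerm_mul_thetaTerm a hb]
  rw [tsum_mul_left, Theta, Theta, tsum_mul_tsum_of_summable_norm
    (summable_norm_thetaTerm _ _ hτ₂) (summable_norm_thetaTerm _ _ hτ₂)]

lemma Theta_add_intCast (c : Fin 2 → ℝ) (e : Fin 2 → ℤ) (σ : Matrix (Fin 2) (Fin 2) ℂ) :
    Theta (c + fun i => (e i : ℝ)) 0 σ = Theta c 0 σ := by
  rw [Theta, Theta, ← (Equiv.addRight e).tsum_eq (thetaTerm c 0 σ)]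
  refine tsum_congr fun n => ?_
  simp only [thetaTerm, Equiv.coe_addRight, Pi.add_apply, Pi.zero_apply, Fin.sum_univ_two]
  push_cast
  ring_nf

lemma Theta_halfVec_add (α r : Fin 2 → ZMod 2) (σ : Matrix (Fin 2) (Fin 2) ℂ) :
    Theta (halfVec α + halfVec r) 0 σ = Theta (halfVec (α + r)) 0 σ := by
  have h : halfVec α + halfVec r =
      halfVec (α + r) + fun i => (((parityLift α i + parityLift r i) / 2 : ℤ) : ℝ) := by
    ext i
    have hc : (parityLift (α + r) i : ℝ) + 2 * (((parityLift α i + parityLift r i) / 2 : ℤ) : ℝ) =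
        parityLift α i + parityLift r i := by
      exact_mod_cast parityLift_add_add_two_mul α r i
    simp only [halfVec, Pi.add_apply]
    linear_combination -hc / 2
  rw [h, Theta_add_intCast]

def secondOrderTheta (τ : Matrix (Fin 2) (Fin 2) ℂ) (r : Fin 2 → ZMod 2) : ℂ :=
  Theta (halfVec r) 0 ((2 : ℂ) • τ)

lemma Theta_halfVec_pow_four (α : Fin 2 → ZMod 2) {b : Fin 2 → ℝ}
    (hb : ∀ i, ∃ k : ℤ, 2 * b i = k) {τ : Matrix (Fin 2) (Fin 2) ℂ}
    (hτ : (of fun i j => (τ i j).im).PosDef) :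
    Theta (halfVec α) b τ ^ 4 =
      ∑ t, parityChar b t * selfConv (shiftProd (secondOrderTheta τ) α) t := by
  have hsq : Theta (halfVec α) b τ ^ 2 =
      ∑ r, parityChar b r * shiftProd (secondOrderTheta τ) α r := by
    simp only [Theta_sq _ hb hτ, shiftProd, secondOrderTheta, Theta_halfVec_add]
  rw [show 4 = 2 * 2 from rfl, pow_mul, hsq, sq_sum_char_mul _ (parityChar_add hb)]

lemma IsHalf.exists_eq_halfVec {a : Fin 2 → ℝ} (ha : IsHalf a) :
    ∃ α : Fin 2 → ZMod 2, a = halfVec α := by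
  refine ⟨fun i => if a i = 0 then 0 else 1, funext fun i => ?_⟩
  rcases ha i with h | h <;> simp [halfVec, parityLift, h, ZMod.val_one]

lemma IsHalf.exists_two_mul_eq_intCast {b : Fin 2 → ℝ} (hb : IsHalf b) (i : Fin 2) :
    ∃ k : ℤ, 2 * b i = k := by
  rcases hb i with h | h
  · exact ⟨0, by simp [h]⟩
  · exact ⟨1, by norm_num [h]⟩

/-- The ten fourth powers of even theta constants, as functions on `H₂`, span a
complex vector space of dimension at most 6. -/
theorem theta_pow_four_span_rank_le_six :
    Module.rank ℂ (Submodule.span ℂ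
      {f : {τ : Matrix (Fin 2) (Fin 2) ℂ // IsSiegel τ} → ℂ |
        ∃ a b : Fin 2 → ℝ, IsHalf a ∧ IsHalf b ∧
          (∃ k : ℤ, 4 * ∑ i, a i * b i = 2 * (k : ℝ)) ∧
          f = fun τ => Theta a b τ.1 ^ 4}) ≤ 6 := by
  let x : {τ : Matrix (Fin 2) (Fin 2) ℂ // IsSiegel τ} → (Fin 2 → ZMod 2) → ℂ :=
    fun τ => secondOrderTheta τ.1
  calc _ ≤ Module.rank ℂ (Submodule.span ℂ (Set.range fun s τ => quarticBasis (x τ) s)) :=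
        Submodule.rank_mono (Submodule.span_le.2 ?_)
    _ ≤ Cardinal.mk (Option (Fin 2 → ZMod 2)) := (rank_span_le _).trans Cardinal.mk_range_le
    _ ≤ 6 := by norm_num [Cardinal.mk_fintype]
  rintro f ⟨a, b, ha, hb, -, rfl⟩
  obtain ⟨α, rfl⟩ := ha.exists_eq_halfVec
  have hf : (fun τ : {τ // IsSiegel τ} => Theta (halfVec α) b τ.1 ^ 4) =
      ∑ t, parityChar b t • fun τ => selfConv (shiftProd (x τ) α) t := by
    funext τ
    simp only [Finset.sum_apply, Pi.smul_apply, smul_eq_mul]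
    exact Theta_halfVec_pow_four α hb.exists_two_mul_eq_intCast τ.2.2
  rw [SetLike.mem_coe, hf]
  exact Submodule.sum_mem _ fun t _ => Submodule.smul_mem _ _
    (selfConv_shiftProd_mem_span CharTwo.add_self_eq_zero (by simp) x α t)
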